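/- arXiv:2011.13015 — 2 statements merged into one kernel-verified Lean document; each statement's English description precedes it below -/
import Mathlib

section
/- Benford's law is scale-invariant: if X is a Benford random variable and s > 0 is a real constant, then the random variable sX is also Benford. -/
open MeasureTheory

/-- The decimal significand: for `x ≠ 0`, the unique `t ∈ [1,10)` with
`|x| = 10^k * t` for some integer `k`; `signif 0 = 0`. -/
noncomputable def signif (x : ℝ) : ℝ :=
  if x = 0 then 0 else |x| * (10 : ℝ) ^ (-⌊Real.logb 10 |x|⌋)

/-- A real random variable `X` on `(Ω, μ)` is Benford if
`P(S(|X|) ≤ t) = log₁₀ t` for all `t ∈ [1,10)`. -/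
def IsBenford {Ω : Type*} [MeasurableSpace Ω] (μ : Measure Ω) (X : Ω → ℝ) : Prop :=
  ∀ t ∈ Set.Ico (1 : ℝ) 10,
    μ {ω | signif |X ω| ≤ t} = ENNReal.ofReal (Real.logb 10 t)

/-!
Write `Y = log₁₀ |X| mod 1`. The event `S(|X|) ≤ t` is the event `Y ≤ log₁₀ t`, so `X` is
Benford exactly when `Y` is uniform on `[0, 1)`. Since `X ≠ 0` almost surely, the variable
attached to `s X` is `log₁₀ s + Y mod 1`, a rotation of `Y` on `ℝ/ℤ`; Lebesgue measure on
`[0, 1)` is the Haar measure of `ℝ/ℤ`, hence rotation invariant.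
-/

open Set

@[fun_prop]
lemma Real.measurable_logb (b : ℝ) : Measurable (Real.logb b) :=
  Real.measurable_log.div_const _

lemma Real.logb_mem_Ico_zero_one_iff {b t : ℝ} (hb : 1 < b) (ht : 0 < t) :
    Real.logb b t ∈ Ico 0 1 ↔ t ∈ Ico 1 b := by
  rw [mem_Ico, mem_Ico, Real.logb_nonneg_iff hb ht, Real.logb_lt_iff_lt_rpow hb ht,
    Real.rpow_one]

lemma Int.fract_add_fract_right {R : Type*} [Ring R] [LinearOrder R] [IsOrderedRing R]
    [FloorRing R] (a b : R) : Int.fract (a + Int.fract b) = Int.fract (a + b) := by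
  rw [← Int.self_sub_floor b, ← add_sub_assoc, Int.fract_sub_intCast]

lemma signif_eq_rpow_fract_logb {x : ℝ} (hx : x ≠ 0) :
    signif x = 10 ^ Int.fract (Real.logb 10 |x|) := by
  rw [signif, if_neg hx, Int.fract, Real.rpow_sub (by norm_num),
    Real.rpow_logb (by norm_num) (by norm_num) (abs_pos.2 hx), Real.rpow_intCast, zpow_neg,
    div_eq_mul_inv]

-- At `x = 0` both sides hold, because `signif 0 = 0` and `Real.logb 10 0 = 0`.
lemma signif_le_iff_fract_logb_le (x : ℝ) {t : ℝ} (ht : 1 ≤ t) :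
    signif x ≤ t ↔ Int.fract (Real.logb 10 |x|) ≤ Real.logb 10 t := by
  rcases eq_or_ne x 0 with rfl | hx
  · simp [signif, Real.logb_nonneg (by norm_num : (1 : ℝ) < 10) ht, zero_le_one.trans ht]
  rw [signif_eq_rpow_fract_logb hx, Real.le_logb_iff_rpow_le (by norm_num) (by linarith)]

lemma ProbabilityTheory.cond_volume_Ico_zero_one :
    ProbabilityTheory.cond volume (Ico (0 : ℝ) 1) = volume.restrict (Ico 0 1) := by
  simp [ProbabilityTheory.cond]

lemma volume_restrict_Ico_zero_one_Iic {τ : ℝ} (hτ : τ ∈ Ico (0 : ℝ) 1) :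
    volume.restrict (Ico 0 1) (Iic τ) = ENNReal.ofReal τ := by
  have hτ_inter : Iic τ ∩ Ico 0 1 = Icc 0 τ := by
    ext x
    simp only [mem_inter_iff, mem_Iic, mem_Ico, mem_Icc]
    constructor <;> intro <;> refine ⟨?_, ?_⟩ <;> grind
  rw [Measure.restrict_apply measurableSet_Iic, hτ_inter, Real.volume_Icc, sub_zero]

lemma measurePreserving_coe_addCircle_Ico :
    MeasurePreserving ((↑) : ℝ → AddCircle (1 : ℝ)) (volume.restrict (Ico 0 1)) volume := by
  simpa [Measure.restrict_congr_set Ico_ae_eq_Ioc] using AddCircle.measurePreserving_mk 1 0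

lemma map_fract_volume_restrict_Ico :
    (volume.restrict (Ico (0 : ℝ) 1)).map Int.fract = volume.restrict (Ico 0 1) := by
  have hfract : Int.fract =ᵐ[volume.restrict (Ico (0 : ℝ) 1)] id :=
    (ae_restrict_mem measurableSet_Ico).mono fun x hx => Int.fract_eq_self.2 hx
  rw [Measure.map_congr hfract, Measure.map_id]

-- `fract (a + ·)` is the rotation by `a` of `ℝ/ℤ`, read through the representatives `[0, 1)`.
lemma measurePreserving_fract_add (a : ℝ) :
    MeasurePreserving (fun x => Int.fract (a + x))
      (volume.restrict (Ico 0 1)) (volume.restrict (Ico 0 1)) := by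
  let g : AddCircle (1 : ℝ) → ℝ := fun y => (AddCircle.equivIco 1 0 y : ℝ)
  have hg_coe : g ∘ (↑) = Int.fract := funext fun x => by simp [g]
  have hg : MeasurePreserving g volume (volume.restrict (Ico 0 1)) := by
    have hg_meas : Measurable g :=
      measurable_subtype_coe.comp (AddCircle.measurableEquivIco 1 0).measurable
    refine ⟨hg_meas, ?_⟩
    rw [← measurePreserving_coe_addCircle_Ico.map_eq, Measure.map_map hg_meas (by fun_prop),
      hg_coe, map_fract_volume_restrict_Ico]
  convert (hg.comp (measurePreserving_add_left volume (a : AddCircle (1 : ℝ)))).comp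
    measurePreserving_coe_addCircle_Ico using 1
  funext x
  simp [← hg_coe]

section

variable {Ω : Type*} [MeasurableSpace Ω] {μ : Measure Ω}

theorem MeasureTheory.pdf.isUniform_Ico_zero_one_iff [IsProbabilityMeasure μ] {Y : Ω → ℝ}
    (hY : Measurable Y) (hY01 : ∀ ω, Y ω ∈ Ico 0 1) :
    pdf.IsUniform Y (Ico 0 1) μ ↔ ∀ τ ∈ Ico (0 : ℝ) 1, μ {ω | Y ω ≤ τ} = ENNReal.ofReal τ := by
  have hcdf : ∀ c, μ {ω | Y ω ≤ c} = μ.map Y (Iic c) := fun c =>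
    (Measure.map_apply hY measurableSet_Iic).symm
  simp_rw [pdf.IsUniform, ProbabilityTheory.cond_volume_Ico_zero_one, hcdf]
  refine ⟨fun h τ hτ => by rw [h, volume_restrict_Ico_zero_one_Iic hτ], fun h => ?_⟩
  refine Measure.ext_of_Iic _ _ fun c => ?_
  rw [Measure.map_apply hY measurableSet_Iic, Measure.restrict_apply measurableSet_Iic]
  rcases lt_or_ge c 0 with hc0 | hc0
  · have hY_empty : Y ⁻¹' Iic c = ∅ :=
      eq_empty_of_forall_notMem fun ω hω => (hY01 ω).1.not_gt (lt_of_le_of_lt hω hc0)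
    have hI_empty : Iic c ∩ Ico 0 1 = ∅ :=
      eq_empty_of_forall_notMem fun x hx => hx.2.1.not_gt (lt_of_le_of_lt hx.1 hc0)
    rw [hY_empty, hI_empty, measure_empty, measure_empty]
  rcases lt_or_ge c 1 with hc1 | hc1
  · rw [← Measure.map_apply hY measurableSet_Iic, ← Measure.restrict_apply measurableSet_Iic,
      h c ⟨hc0, hc1⟩, volume_restrict_Ico_zero_one_Iic ⟨hc0, hc1⟩]
  · have hY_univ : Y ⁻¹' Iic c = univ :=
      eq_univ_of_forall fun ω => ((hY01 ω).2.trans_le hc1).le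
    have hI : Iic c ∩ Ico 0 1 = Ico 0 1 :=
      inter_eq_right.2 fun x hx => (hx.2.trans_le hc1).le
    rw [hY_univ, hI, measure_univ, Real.volume_Ico, sub_zero, ENNReal.ofReal_one]

theorem MeasureTheory.pdf.IsUniform.fract_const_add {Y : Ω → ℝ} (hY : Measurable Y)
    (hu : pdf.IsUniform Y (Ico 0 1) μ) (a : ℝ) :
    pdf.IsUniform (fun ω => Int.fract (a + Y ω)) (Ico 0 1) μ := by
  rw [pdf.IsUniform, ProbabilityTheory.cond_volume_Ico_zero_one] at hu ⊢
  rw [← (measurePreserving_fract_add a).map_eq, ← hu,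
    Measure.map_map (measurePreserving_fract_add a).measurable hY]
  rfl

theorem isBenford_iff_forall_fract_logb_le {X : Ω → ℝ} :
    IsBenford μ X ↔ ∀ τ ∈ Ico (0 : ℝ) 1,
      μ {ω | Int.fract (Real.logb 10 |X ω|) ≤ τ} = ENNReal.ofReal τ := by
  have hset : ∀ t ∈ Ico (1 : ℝ) 10, {ω | signif |X ω| ≤ t} =
      {ω | Int.fract (Real.logb 10 |X ω|) ≤ Real.logb 10 t} := fun t ht => by
    simp_rw [signif_le_iff_fract_logb_le _ ht.1, abs_abs]
  constructor
  · intro h τ hτ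
    have ht : (10 : ℝ) ^ τ ∈ Ico 1 10 := by
      rwa [← Real.logb_mem_Ico_zero_one_iff (by norm_num) (by positivity),
        Real.logb_rpow (by norm_num) (by norm_num)]
    simpa [hset _ ht, Real.logb_rpow] using h _ ht
  · intro h t ht
    rw [hset t ht]
    exact h _ ((Real.logb_mem_Ico_zero_one_iff (by norm_num) (by linarith [ht.1])).2 ht)

theorem isBenford_iff_isUniform [IsProbabilityMeasure μ] {X : Ω → ℝ} (hX : Measurable X) :
    IsBenford μ X ↔ pdf.IsUniform (fun ω => Int.fract (Real.logb 10 |X ω|)) (Ico 0 1) μ := by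
  rw [isBenford_iff_forall_fract_logb_le, pdf.isUniform_Ico_zero_one_iff (by fun_prop)
    fun ω => ⟨Int.fract_nonneg _, Int.fract_lt_one _⟩]

lemma IsBenford.ae_ne_zero {X : Ω → ℝ} (h : IsBenford μ X) : ∀ᵐ ω ∂μ, X ω ≠ 0 := by
  refine ae_iff.2 (measure_mono_null (fun ω hω => ?_) (by simpa using h 1 ⟨le_rfl, by norm_num⟩))
  simp [not_not.1 hω, signif]

end

/-- Benford's law is scale-invariant: if `X` is Benford and `s > 0`,
then `s·X` is also Benford. -/
theorem benford_scale_invariant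
    {Ω : Type*} [MeasurableSpace Ω] (μ : Measure Ω) [IsProbabilityMeasure μ]
    (X : Ω → ℝ) (hX : Measurable X) (hben : IsBenford μ X)
    (s : ℝ) (hs : 0 < s) :
    IsBenford μ (fun ω => s * X ω) := by
  have hlog : (fun ω => Int.fract (Real.logb 10 |s * X ω|)) =ᵐ[μ]
      fun ω => Int.fract (Real.logb 10 s + Int.fract (Real.logb 10 |X ω|)) :=
    hben.ae_ne_zero.mono fun ω hω => by
      dsimp only
      rw [abs_mul, abs_of_pos hs, Real.logb_mul hs.ne' (abs_ne_zero.2 hω),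
        Int.fract_add_fract_right]
  rw [isBenford_iff_isUniform hX] at hben
  rw [isBenford_iff_isUniform (by fun_prop), pdf.IsUniform, Measure.map_congr hlog]
  exact hben.fract_const_add (by fun_prop) _
end

section
/- Let a > 0, b < 10a, and let X be a random variable with P(a ≤ X ≤ b) = 1. Then there exists t ∈ [1,10) with P(S(|X|) ≤ t) ≠ log₁₀ t; in fact, there is a nonempty open subinterval (t₁, t₂) of [1,10) such that P(t₁ < S(|X|) ≤ t₂) = 0 while log₁₀ t₂ − log₁₀ t₁ > 0. -/
/-!
Let `10^k ≤ a < 10^(k+1)`. Since `b < 10a < 10^(k+2)`, the range `[a, b]` meets at most the two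
decades `[10^k, 10^(k+1))` and `[10^(k+1), 10^(k+2))`, on which `S` is `x / 10^k` resp.
`x / 10^(k+1)`. If only the first is met, `S` misses `(b / 10^k, 10)`; otherwise it misses
`(b / 10^(k+1), a / 10^k)`, which is nonempty because `b < 10a`. A significand gap `(t₁, t₂]`
makes the distribution function of `S(|X|)` constant on `[t₁, t₂]`, whereas `log₁₀` is strictly
increasing there, so the two differ at `t₁` or at `t₂`.
-/

open MeasureTheory

open Set

lemma signif_eq_div_zpow {x : ℝ} {k : ℤ} (h₁ : (10 : ℝ) ^ k ≤ x) (h₂ : x < (10 : ℝ) ^ (k + 1)) :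
    signif x = x / 10 ^ k := by
  have hx : 0 < x := (zpow_pos (by norm_num) k).trans_le h₁
  have hfloor : ⌊Real.logb 10 x⌋ = k := by
    rw [Int.floor_eq_iff, Real.le_logb_iff_rpow_le (by norm_num) hx,
      Real.logb_lt_iff_lt_rpow (by norm_num) hx, Real.rpow_intCast]
    exact ⟨h₁, by exact_mod_cast h₂⟩
  rw [signif, if_neg hx.ne', abs_of_pos hx, hfloor, zpow_neg, div_eq_mul_inv]

lemma exists_Ioo_disjoint_signif_Icc {a b : ℝ} (ha : 0 < a) (hab : a ≤ b) (hb : b < 10 * a) :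
    ∃ u v : ℝ, 1 ≤ u ∧ u < v ∧ v ≤ 10 ∧ ∀ x ∈ Icc a b, signif x ∉ Ioo u v := by
  set k := Int.log 10 a
  have hak : (10 : ℝ) ^ k ≤ a := by exact_mod_cast Int.zpow_log_le_self (by norm_num) ha
  have hak' : a < 10 * (10 : ℝ) ^ k := by
    simpa [zpow_add_one₀, mul_comm] using Int.lt_zpow_succ_log_self (b := 10) (by norm_num) a
  have hpk : (0 : ℝ) < 10 ^ k := zpow_pos (by norm_num) k
  have hsucc : (10 : ℝ) ^ (k + 1) = 10 * 10 ^ k := by rw [zpow_add_one₀ (by norm_num), mul_comm]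
  rcases lt_or_ge b (10 ^ (k + 1)) with hb' | hb'
  · refine ⟨b / 10 ^ k, 10, ?_, ?_, le_rfl, fun x hx hmem => ?_⟩
    · rw [le_div_iff₀ hpk, one_mul]; linarith
    · rw [div_lt_iff₀ hpk]; linarith
    · rw [signif_eq_div_zpow (hak.trans hx.1) (hx.2.trans_lt hb')] at hmem
      exact (div_le_div_of_nonneg_right hx.2 hpk.le).not_gt hmem.1
  · refine ⟨b / 10 ^ (k + 1), a / 10 ^ k, ?_, ?_, ?_, fun x hx hmem => ?_⟩
    · rwa [le_div_iff₀ (by positivity), one_mul]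
    · rw [hsucc, div_lt_div_iff₀ (by positivity) hpk]; nlinarith
    · rw [div_le_iff₀ hpk]; linarith
    rcases lt_or_ge x (10 ^ (k + 1)) with hx' | hx'
    · rw [signif_eq_div_zpow (hak.trans hx.1) hx'] at hmem
      exact (div_le_div_of_nonneg_right hx.1 hpk.le).not_gt hmem.2
    · have hx'' : x < (10 : ℝ) ^ (k + 1 + 1) := by
        rw [zpow_add_one₀ (by norm_num), hsucc]; linarith [hx.2]
      rw [signif_eq_div_zpow hx' hx''] at hmem
      exact (div_le_div_of_nonneg_right hx.2 (by positivity)).not_gt hmem.1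

lemma measure_le_eq_of_measure_Ioc_eq_zero {Ω α : Type*} [MeasurableSpace Ω] [LinearOrder α]
    {μ : Measure Ω} {f : Ω → α} {s t : α} (hst : s ≤ t)
    (h : μ {ω | s < f ω ∧ f ω ≤ t} = 0) :
    μ {ω | f ω ≤ t} = μ {ω | f ω ≤ s} := by
  refine le_antisymm ?_ (measure_mono fun _ hω => hω.trans hst)
  calc μ {ω | f ω ≤ t} ≤ μ ({ω | f ω ≤ s} ∪ {ω | s < f ω ∧ f ω ≤ t}) :=
        measure_mono fun ω hω => (le_or_gt (f ω) s).imp id fun hs => ⟨hs, hω⟩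
    _ ≤ μ {ω | f ω ≤ s} + μ {ω | s < f ω ∧ f ω ≤ t} := measure_union_le _ _
    _ = μ {ω | f ω ≤ s} := by rw [h, add_zero]

/-- If `0 < a`, `b < 10a`, and `P(a ≤ X ≤ b) = 1`, then there is `t ∈ [1,10)`
with `P(S(|X|) ≤ t) ≠ log₁₀ t`; in fact there is a nonempty open subinterval
`(t₁, t₂)` of `[1,10)` with `P(t₁ < S(|X|) ≤ t₂) = 0` while
`log₁₀ t₂ − log₁₀ t₁ > 0`. -/
theorem significand_gap_of_short_range
    {Ω : Type*} [MeasurableSpace Ω] (μ : Measure Ω) [IsProbabilityMeasure μ]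
    (X : Ω → ℝ) (hX : Measurable X) (a b : ℝ) (ha : 0 < a) (hb : b < 10 * a)
    (hrange : μ {ω | a ≤ X ω ∧ X ω ≤ b} = 1) :
    (∃ t ∈ Set.Ico (1 : ℝ) 10,
        μ {ω | signif |X ω| ≤ t} ≠ ENNReal.ofReal (Real.logb 10 t)) ∧
      ∃ t₁ t₂ : ℝ, 1 ≤ t₁ ∧ t₁ < t₂ ∧ t₂ ≤ 10 ∧
        μ {ω | t₁ < signif |X ω| ∧ signif |X ω| ≤ t₂} = 0 ∧
        0 < Real.logb 10 t₂ - Real.logb 10 t₁ := by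
  obtain ⟨ω₀, ha₀, hb₀⟩ : {ω | a ≤ X ω ∧ X ω ≤ b}.Nonempty :=
    nonempty_of_measure_ne_zero (hrange ▸ one_ne_zero)
  obtain ⟨t₁, v, ht₁, ht₁v, hv, hgap⟩ := exists_Ioo_disjoint_signif_Icc ha (ha₀.trans hb₀) hb
  obtain ⟨t₂, ht₁₂, ht₂v⟩ := exists_between ht₁v
  have hae : ∀ᵐ ω ∂μ, X ω ∈ Icc a b :=
    (mem_ae_iff_prob_eq_one (hX measurableSet_Icc)).2 hrange
  have hnull : μ {ω | t₁ < signif |X ω| ∧ signif |X ω| ≤ t₂} = 0 := by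
    refine measure_eq_zero_iff_ae_notMem.2 (hae.mono fun ω hω hmem => ?_)
    obtain ⟨hlo, hhi⟩ : t₁ < signif |X ω| ∧ signif |X ω| ≤ t₂ := hmem
    rw [abs_of_pos (ha.trans_le hω.1)] at hlo hhi
    exact hgap _ hω ⟨hlo, hhi.trans_lt ht₂v⟩
  have hlog : Real.logb 10 t₁ < Real.logb 10 t₂ :=
    Real.logb_lt_logb (by norm_num) (by linarith) ht₁₂
  refine ⟨?_, t₁, t₂, ht₁, ht₁₂, (ht₂v.trans_le hv).le, hnull, sub_pos.2 hlog⟩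
  by_cases hcdf : μ {ω | signif |X ω| ≤ t₁} = ENNReal.ofReal (Real.logb 10 t₁)
  · refine ⟨t₂, ⟨by linarith, by linarith⟩, ?_⟩
    rw [measure_le_eq_of_measure_Ioc_eq_zero (by linarith) hnull, hcdf]
    have hlog₁ : 0 ≤ Real.logb 10 t₁ := Real.logb_nonneg (by norm_num) ht₁
    exact ((ENNReal.ofReal_lt_ofReal_iff_of_nonneg hlog₁).2 hlog).ne
  · exact ⟨t₁, ⟨ht₁, by linarith⟩, hcdf⟩
end
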